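/- arXiv:cs/0001020 — 5 statements merged into one kernel-verified Lean document; each statement's English description precedes it below -/
import Mathlib

section
/- Let P_T = {p : p(x,y) = f(y)·r(x|y) for some conditional pmf r} and let Q be a family of strictly positive joint distributions {q_θ : θ ∈ Θ}. Then a pair (p*, q*) ∈ P_T × Q minimizes D(p‖q) over P_T × Q if and only if q* maximizes the log-likelihood L(q) = Σ_y f(y) log q(y) over Q and p*(x,y) = f(y)·q*(x|y). -/
/-!
Split `D(f·r ‖ q)` along `y`: it equals `Σ_y f(y) log f(y) - L(q) + Σ_y f(y) D(r(·|y) ‖ q(·|y))`.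
The last sum is a nonnegative combination of Gibbs divergences, zero exactly when `r = q(·|·)`.
Hence minimizing over `r` for fixed `q` leaves `Σ_y f(y) log f(y) - L(q)`, and a pair is a
joint minimizer iff `q` maximizes `L` and `r` is the conditional of `q`.
-/

open Real InformationTheory

section Gibbs

lemma mul_log_div_eq_mul_klFun_add (p : ℝ) {s : ℝ} (hs : s ≠ 0) :
    p * log (p / s) = s * klFun (p / s) + (p - s) := by
  rw [klFun_apply]
  field_simp
  ring

variable {ι : Type*} [Fintype ι] {p s : ι → ℝ}

lemma sum_mul_log_div_eq_sum_mul_klFun (hs : ∀ i, s i ≠ 0) (hsum : ∑ i, p i = ∑ i, s i) :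
    ∑ i, p i * log (p i / s i) = ∑ i, s i * klFun (p i / s i) := by
  simp only [mul_log_div_eq_mul_klFun_add _ (hs _), Finset.sum_add_distrib,
    Finset.sum_sub_distrib, hsum, sub_self, add_zero]

lemma sum_mul_log_div_nonneg (hp : ∀ i, 0 ≤ p i) (hs : ∀ i, 0 < s i)
    (hsum : ∑ i, p i = ∑ i, s i) : 0 ≤ ∑ i, p i * log (p i / s i) := by
  rw [sum_mul_log_div_eq_sum_mul_klFun (fun i ↦ (hs i).ne') hsum]
  exact Finset.sum_nonneg fun i _ ↦
    mul_nonneg (hs i).le (klFun_nonneg (div_nonneg (hp i) (hs i).le))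

lemma sum_mul_log_div_eq_zero_iff (hp : ∀ i, 0 ≤ p i) (hs : ∀ i, 0 < s i)
    (hsum : ∑ i, p i = ∑ i, s i) : ∑ i, p i * log (p i / s i) = 0 ↔ p = s := by
  have hdiv : ∀ i, 0 ≤ p i / s i := fun i ↦ div_nonneg (hp i) (hs i).le
  rw [sum_mul_log_div_eq_sum_mul_klFun (fun i ↦ (hs i).ne') hsum,
    Finset.sum_eq_zero_iff_of_nonneg fun i _ ↦ mul_nonneg (hs i).le (klFun_nonneg (hdiv i)),
    funext_iff]
  simp only [Finset.mem_univ, true_implies, mul_eq_zero, (hs _).ne', false_or,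
    klFun_eq_zero_iff (hdiv _), div_eq_one_iff_eq (hs _).ne']

end Gibbs

noncomputable section JointKL

variable {X Y : Type*} [Fintype X]

def marginal (q : X → Y → ℝ) (y : Y) : ℝ := ∑ x, q x y

def conditional (q : X → Y → ℝ) (y : Y) (x : X) : ℝ := q x y / marginal q y

/-- The objective `D(p ‖ q)` at `p(x,y) = f(y) r(x|y)`. -/
def jointKL [Fintype Y] (f : Y → ℝ) (r : Y → X → ℝ) (q : X → Y → ℝ) : ℝ :=
  ∑ x, ∑ y, f y * r y x * log (f y * r y x / q x y)

def logLikelihood [Fintype Y] (f : Y → ℝ) (q : X → Y → ℝ) : ℝ := ∑ y, f y * log (marginal q y)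

def conditionalKL (r : Y → X → ℝ) (q : X → Y → ℝ) (y : Y) : ℝ :=
  ∑ x, r y x * log (r y x / conditional q y x)

variable {f : Y → ℝ} {r : Y → X → ℝ} {q : X → Y → ℝ}

lemma marginal_pos [Nonempty X] (hq : ∀ x y, 0 < q x y) (y : Y) : 0 < marginal q y :=
  Finset.sum_pos (fun x _ ↦ hq x y) Finset.univ_nonempty

lemma conditional_pos [Nonempty X] (hq : ∀ x y, 0 < q x y) (y : Y) (x : X) :
    0 < conditional q y x :=
  div_pos (hq x y) (marginal_pos hq y)

lemma sum_conditional [Nonempty X] (hq : ∀ x y, 0 < q x y) (y : Y) :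
    ∑ x, conditional q y x = 1 := by
  simp only [conditional, ← Finset.sum_div]
  exact div_self (marginal_pos hq y).ne'

lemma mul_log_mul_div_eq {a b c m : ℝ} (hc : c ≠ 0) (hm : m ≠ 0) :
    a * b * log (a * b / c) = a * b * log a - a * b * log m + a * (b * log (b / (c / m))) := by
  rcases eq_or_ne a 0 with rfl | ha
  · simp
  rcases eq_or_ne b 0 with rfl | hb
  · simp
  rw [log_div (mul_ne_zero ha hb) hc, log_mul ha hb, log_div hb (div_ne_zero hc hm),
    log_div hc hm]
  ring

lemma jointKL_eq [Fintype Y] [Nonempty X] (hq : ∀ x y, 0 < q x y) (hr : ∀ y, ∑ x, r y x = 1) :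
    jointKL f r q = ∑ y, f y * log (f y) - logLikelihood f q + ∑ y, f y * conditionalKL r q y := by
  have hslice : ∀ y, ∑ x, f y * r y x * log (f y * r y x / q x y) =
      f y * log (f y) - f y * log (marginal q y) + f y * conditionalKL r q y := by
    intro y
    simp only [mul_log_mul_div_eq (hq _ y).ne' (marginal_pos hq y).ne', Finset.sum_add_distrib,
      Finset.sum_sub_distrib, ← Finset.sum_mul, ← Finset.mul_sum, hr y, mul_one, conditionalKL,
      conditional]
  rw [jointKL, Finset.sum_comm, Finset.sum_congr rfl fun y _ ↦ hslice y, Finset.sum_add_distrib,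
    Finset.sum_sub_distrib, logLikelihood]

lemma conditionalKL_nonneg [Nonempty X] (hq : ∀ x y, 0 < q x y) (hr : ∀ y, ∑ x, r y x = 1)
    (hr₀ : ∀ y x, 0 ≤ r y x) (y : Y) : 0 ≤ conditionalKL r q y :=
  sum_mul_log_div_nonneg (hr₀ y) (conditional_pos hq y) (by rw [hr, sum_conditional hq])

lemma conditionalKL_eq_zero_iff [Nonempty X] (hq : ∀ x y, 0 < q x y) (hr : ∀ y, ∑ x, r y x = 1)
    (hr₀ : ∀ y x, 0 ≤ r y x) (y : Y) : conditionalKL r q y = 0 ↔ r y = conditional q y :=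
  sum_mul_log_div_eq_zero_iff (hr₀ y) (conditional_pos hq y) (by rw [hr, sum_conditional hq])

lemma jointKL_conditional [Fintype Y] [Nonempty X] (hq : ∀ x y, 0 < q x y) :
    jointKL f (conditional q) q = ∑ y, f y * log (f y) - logLikelihood f q := by
  have hzero : ∀ y, conditionalKL (conditional q) q y = 0 := fun y ↦
    (conditionalKL_eq_zero_iff hq (sum_conditional hq) (fun y x ↦ (conditional_pos hq y x).le)
      y).mpr rfl
  simp [jointKL_eq hq (sum_conditional hq), hzero]

lemma sub_logLikelihood_le_jointKL [Fintype Y] [Nonempty X] (hf : ∀ y, 0 ≤ f y) (hq : ∀ x y, 0 < q x y)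
    (hr : ∀ y, ∑ x, r y x = 1) (hr₀ : ∀ y x, 0 ≤ r y x) :
    ∑ y, f y * log (f y) - logLikelihood f q ≤ jointKL f r q := by
  rw [jointKL_eq hq hr, le_add_iff_nonneg_right]
  exact Finset.sum_nonneg fun y _ ↦ mul_nonneg (hf y) (conditionalKL_nonneg hq hr hr₀ y)

lemma jointKL_le_sub_logLikelihood_iff [Fintype Y] [Nonempty X] (hf : ∀ y, 0 < f y)
    (hq : ∀ x y, 0 < q x y) (hr : ∀ y, ∑ x, r y x = 1) (hr₀ : ∀ y x, 0 ≤ r y x) :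
    jointKL f r q ≤ ∑ y, f y * log (f y) - logLikelihood f q ↔ r = conditional q := by
  have hterm : ∀ y, 0 ≤ f y * conditionalKL r q y := fun y ↦
    mul_nonneg (hf y).le (conditionalKL_nonneg hq hr hr₀ y)
  have hsum : 0 ≤ ∑ y, f y * conditionalKL r q y := Finset.sum_nonneg fun y _ ↦ hterm y
  rw [jointKL_eq hq hr, add_le_iff_nonpos_right, hsum.ge_iff_eq',
    Finset.sum_eq_zero_iff_of_nonneg fun y _ ↦ hterm y, funext_iff]
  simp only [Finset.mem_univ, true_implies, mul_eq_zero, (hf _).ne', false_or,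
    conditionalKL_eq_zero_iff hq hr hr₀]

end JointKL

theorem kl_min_iff_maximum_likelihood_general
    {X Y Θ : Type*} [Fintype X] [Fintype Y] [Nonempty X]
    (f : Y → ℝ) (hfpos : ∀ y, 0 < f y)
    (q : Θ → X → Y → ℝ)
    (hqpos : ∀ θ x y, 0 < q θ x y)
    (rstar : Y → X → ℝ) (θstar : Θ)
    (hr1 : ∀ y, ∑ x, rstar y x = 1) (hrnn : ∀ y x, 0 ≤ rstar y x) :
    ((∀ (r : Y → X → ℝ) (θ : Θ), (∀ y, ∑ x, r y x = 1) → (∀ y x, 0 ≤ r y x) →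
        (∑ x, ∑ y, f y * rstar y x * Real.log (f y * rstar y x / q θstar x y))
          ≤ ∑ x, ∑ y, f y * r y x * Real.log (f y * r y x / q θ x y))
      ↔ ((∀ θ : Θ, (∑ y, f y * Real.log (∑ x, q θ x y))
              ≤ ∑ y, f y * Real.log (∑ x, q θstar x y))
          ∧ ∀ y x, rstar y x = q θstar x y / (∑ x', q θstar x' y))) := by
  change (∀ r θ, _ → _ → jointKL f rstar (q θstar) ≤ jointKL f r (q θ)) ↔
    (∀ θ, logLikelihood f (q θ) ≤ logLikelihood f (q θstar)) ∧
      ∀ y x, rstar y x = conditional (q θstar) y x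
  have hlower : ∀ r θ, (∀ y, ∑ x, r y x = 1) → (∀ y x, 0 ≤ r y x) →
      ∑ y, f y * log (f y) - logLikelihood f (q θ) ≤ jointKL f r (q θ) := fun r θ ↦
    sub_logLikelihood_le_jointKL (fun y ↦ (hfpos y).le) (hqpos θ)
  have hattained : ∀ θ, jointKL f (conditional (q θ)) (q θ) =
      ∑ y, f y * log (f y) - logLikelihood f (q θ) := fun θ ↦ jointKL_conditional (hqpos θ)
  constructor
  · intro hmin
    have hle : ∀ θ, jointKL f rstar (q θstar) ≤ ∑ y, f y * log (f y) - logLikelihood f (q θ) :=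
      fun θ ↦ hattained θ ▸ hmin _ θ (sum_conditional (hqpos θ))
        (fun y x ↦ (conditional_pos (hqpos θ) y x).le)
    have hcond := (jointKL_le_sub_logLikelihood_iff hfpos (hqpos θstar) hr1 hrnn).mp (hle θstar)
    refine ⟨fun θ ↦ ?_, fun y x ↦ congrFun₂ hcond y x⟩
    linarith [hle θ, hlower rstar θstar hr1 hrnn]
  · rintro ⟨hmax, hrstar⟩ r θ hr hr₀
    rw [funext₂ hrstar, hattained]
    linarith [hmax θ, hlower r θ hr hr₀]

/-- A pair `(p*, q*) ∈ P_T × Q` minimizes `D(p‖q)` if and only if `q*`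
maximizes the log-likelihood `L(q) = Σ_y f(y) log q(y)` over the family and
`p*(x,y) = f(y) q*(x|y)`. -/
theorem kl_min_iff_maximum_likelihood
    {X Y Θ : Type*} [Fintype X] [Fintype Y] [Nonempty X] [Nonempty Y]
    (f : Y → ℝ) (hf1 : ∑ y, f y = 1) (hfpos : ∀ y, 0 < f y)
    (q : Θ → X → Y → ℝ)
    (hq1 : ∀ θ, ∑ x, ∑ y, q θ x y = 1) (hqpos : ∀ θ x y, 0 < q θ x y)
    (hmax : ∃ θ0 : Θ, ∀ θ : Θ,
      (∑ y, f y * Real.log (∑ x, q θ x y)) ≤ ∑ y, f y * Real.log (∑ x, q θ0 x y))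
    (rstar : Y → X → ℝ) (θstar : Θ)
    (hr1 : ∀ y, ∑ x, rstar y x = 1) (hrnn : ∀ y x, 0 ≤ rstar y x) :
    ((∀ (r : Y → X → ℝ) (θ : Θ), (∀ y, ∑ x, r y x = 1) → (∀ y x, 0 ≤ r y x) →
        (∑ x, ∑ y, f y * rstar y x * Real.log (f y * rstar y x / q θstar x y))
          ≤ ∑ x, ∑ y, f y * r y x * Real.log (f y * r y x / q θ x y))
      ↔ ((∀ θ : Θ, (∑ y, f y * Real.log (∑ x, q θ x y))
              ≤ ∑ y, f y * Real.log (∑ x, q θstar x y))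
          ∧ ∀ y x, rstar y x = q θstar x y / (∑ x', q θstar x' y))) :=
  kl_min_iff_maximum_likelihood_general f hfpos q hqpos rstar θstar hr1 hrnn
end

section
/- EM monotonicity: Let q_θ(x,y) be a strictly positive family of joint pmfs on finite X × Y parameterized by θ, and f a pmf on Y. Define the EM auxiliary function EM_{θ_i}(θ) = Σ_y f(y) Σ_x q_{θ_i}(x|y) log q_θ(x,y). If θ_{i+1} satisfies EM_{θ_i}(θ_{i+1}) ≥ EM_{θ_i}(θ_i), then the incomplete-data log-likelihood L(θ) = Σ_y f(y) log(Σ_x q_θ(x,y)) satisfies L(θ_{i+1}) ≥ L(θ_i). -/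
open scoped BigOperators

/-- Gibbs' inequality. -/
lemma em_gibbs {X : Type*} [Fintype X] (p r : X → ℝ)
    (hp : ∀ x, 0 < p x) (hr : ∀ x, 0 < r x)
    (hps : ∑ x, p x = 1) (hrs : ∑ x, r x = 1) :
    ∑ x, p x * Real.log (r x) ≤ ∑ x, p x * Real.log (p x) := by
  have h : ∑ x, p x * Real.log (r x) - ∑ x, p x * Real.log (p x)
      = ∑ x, p x * Real.log (r x / p x) := by
    rw [← Finset.sum_sub_distrib]
    refine Finset.sum_congr rfl fun x _ => ?_
    rw [Real.log_div (hr x).ne' (hp x).ne']; ring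
  have hb : ∑ x, p x * Real.log (r x / p x) ≤ ∑ x, (r x - p x) := by
    refine Finset.sum_le_sum fun x _ => ?_
    have := Real.log_le_sub_one_of_pos (div_pos (hr x) (hp x))
    calc p x * Real.log (r x / p x) ≤ p x * (r x / p x - 1) := by
          exact mul_le_mul_of_nonneg_left this (hp x).le
      _ = r x - p x := by rw [mul_sub, mul_one, mul_div_cancel₀ _ (hp x).ne']
  have : ∑ x, (r x - p x) = 0 := by rw [Finset.sum_sub_distrib, hps, hrs]; ring
  linarith [h ▸ hb.trans_eq this]

/-- EM monotonicity: if the EM auxiliary function does not decrease at the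
update `θi → θn`, then the incomplete-data log-likelihood does not decrease. -/
theorem em_monotonicity
    {X Y Θ : Type*} [Fintype X] [Fintype Y] [Nonempty X] [Nonempty Y]
    (q : Θ → X → Y → ℝ) (f : Y → ℝ)
    (hq1 : ∀ θ, ∑ x, ∑ y, q θ x y = 1) (hqpos : ∀ θ x y, 0 < q θ x y)
    (hf1 : ∑ y, f y = 1) (hfnn : ∀ y, 0 ≤ f y)
    (θi θn : Θ)
    (hEM : (∑ y, f y * ∑ x, (q θi x y / ∑ x', q θi x' y) * Real.log (q θi x y))
        ≤ ∑ y, f y * ∑ x, (q θi x y / ∑ x', q θi x' y) * Real.log (q θn x y)) :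
    (∑ y, f y * Real.log (∑ x, q θi x y))
      ≤ ∑ y, f y * Real.log (∑ x, q θn x y) := by
  have hS : ∀ θ y, 0 < ∑ x, q θ x y := fun θ y =>
    Finset.sum_pos (fun x _ => hqpos θ x y) Finset.univ_nonempty
  -- posterior p x y := q θi x y / S θi y
  set p : X → Y → ℝ := fun x y => q θi x y / ∑ x', q θi x' y with hp
  have hpsum : ∀ y, ∑ x, p x y = 1 := by
    intro y
    simp only [hp, ← Finset.sum_div]
    exact div_self (hS θi y).ne'
  have hppos : ∀ x y, 0 < p x y := fun x y => div_pos (hqpos θi x y) (hS θi y)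
  -- key identity
  have key : ∀ θ y, Real.log (∑ x, q θ x y)
      = (∑ x, p x y * Real.log (q θ x y))
        - ∑ x, p x y * Real.log (q θ x y / ∑ x', q θ x' y) := by
    intro θ y
    rw [← Finset.sum_sub_distrib]
    have : ∀ x, p x y * Real.log (q θ x y)
        - p x y * Real.log (q θ x y / ∑ x', q θ x' y)
        = p x y * Real.log (∑ x', q θ x' y) := by
      intro x
      rw [Real.log_div (hqpos θ x y).ne' (hS θ y).ne']; ring
    rw [Finset.sum_congr rfl fun x _ => this x, ← Finset.sum_mul, hpsum y, one_mul]
  -- Gibbs per y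
  have hgibbs : ∀ y,
      ∑ x, p x y * Real.log (q θn x y / ∑ x', q θn x' y)
        ≤ ∑ x, p x y * Real.log (p x y) := by
    intro y
    refine em_gibbs (fun x => p x y) (fun x => q θn x y / ∑ x', q θn x' y)
      (fun x => hppos x y) (fun x => div_pos (hqpos θn x y) (hS θn y))
      (hpsum y) ?_
    rw [← Finset.sum_div]
    exact div_self (hS θn y).ne'
  calc ∑ y, f y * Real.log (∑ x, q θi x y)
      = (∑ y, f y * ∑ x, p x y * Real.log (q θi x y))
        - ∑ y, f y * ∑ x, p x y * Real.log (p x y) := by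
        rw [← Finset.sum_sub_distrib]
        refine Finset.sum_congr rfl fun y _ => ?_
        rw [key θi y]; ring
    _ ≤ (∑ y, f y * ∑ x, p x y * Real.log (q θn x y))
        - ∑ y, f y * ∑ x, p x y * Real.log (q θn x y / ∑ x', q θn x' y) := by
        refine sub_le_sub hEM (Finset.sum_le_sum fun y _ => ?_)
        exact mul_le_mul_of_nonneg_left (hgibbs y) (hfnn y)
    _ = ∑ y, f y * Real.log (∑ x, q θn x y) := by
        rw [← Finset.sum_sub_distrib]
        refine Finset.sum_congr rfl fun y _ => ?_
        rw [key θn y]; ring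
end

section
/- One alternating minimization step between the set P_T of joint distributions with Y-marginal f and the model family Q(Θ) is equivalent to an EM update: if p_n is the I-projection of q_{θ_n} onto P_T, then arg min over θ of D(p_n ‖ q_θ) equals arg max over θ of Σ_y f(y) E_{q_{θ_n}(X|y)}[log q_θ(X,y)]. -/
open scoped BigOperators

/-- One alternating-minimization step equals an EM update: with `p_n` the
I-projection `p_n(x,y) = f(y) q_{θn}(x|y)` of `q_{θn}` onto `P_T`, the map
`θ ↦ D(p_n ‖ q_θ)` equals a constant minus the EM auxiliary function
`θ ↦ Σ_y f(y) E_{q_{θn}(X|y)}[log q_θ(X,y)]`, so their argmin/argmax agree. -/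
theorem alternating_minimization_eq_em_update
    {X Y Θ : Type*} [Fintype X] [Fintype Y] [Nonempty X] [Nonempty Y]
    (f : Y → ℝ) (hf1 : ∑ y, f y = 1) (hfpos : ∀ y, 0 < f y)
    (q : Θ → X → Y → ℝ)
    (hq1 : ∀ θ, ∑ x, ∑ y, q θ x y = 1) (hqpos : ∀ θ x y, 0 < q θ x y)
    (θn : Θ) :
    ∃ C : ℝ, ∀ θ : Θ,
      (∑ x, ∑ y, (f y * (q θn x y / ∑ x', q θn x' y))
          * Real.log ((f y * (q θn x y / ∑ x', q θn x' y)) / q θ x y))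
        = C - ∑ y, f y * ∑ x, (q θn x y / ∑ x', q θn x' y) * Real.log (q θ x y) := by
  refine ⟨∑ x, ∑ y, (f y * (q θn x y / ∑ x', q θn x' y))
      * Real.log (f y * (q θn x y / ∑ x', q θn x' y)), fun θ => ?_⟩
  have hp : ∀ x y, 0 < f y * (q θn x y / ∑ x', q θn x' y) := fun x y =>
    mul_pos (hfpos y) (div_pos (hqpos θn x y)
      (Finset.sum_pos (fun x' _ => hqpos θn x' y) Finset.univ_nonempty))
  have key : ∀ x y, (f y * (q θn x y / ∑ x', q θn x' y))
      * Real.log ((f y * (q θn x y / ∑ x', q θn x' y)) / q θ x y)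
      = (f y * (q θn x y / ∑ x', q θn x' y))
        * Real.log (f y * (q θn x y / ∑ x', q θn x' y))
        - (f y * (q θn x y / ∑ x', q θn x' y)) * Real.log (q θ x y) := by
    intro x y
    rw [Real.log_div (hp x y).ne' (hqpos θ x y).ne', mul_sub]
  simp_rw [key, Finset.sum_sub_distrib]
  congr 1
  rw [Finset.sum_comm]
  congr 1; ext y
  rw [Finset.mul_sum]
  congr 1; ext x
  ring
end

section
/- N-best EM update validity: Suppose q_θ(x,y) > 0 for all θ, x, y, and s_θ : Y → finite nonempty subsets of X is a sampling family. Define the truncated model q^s_θ(x,y) = q_θ(x,y)·1[x ∈ s_θ(y)] and its conditional q^s_θ(x|y) = q_θ(x,y)/Σ_{x'∈s_θ(y)} q_θ(x',y) for x ∈ s_θ(y), 0 otherwise. If θ_{i+1} = arg max_θ Σ_y f(y) E_{q^s_{θ_i}(X|y)}[log q_θ(X,y)] and s_{θ_i}(y) ⊆ s_{θ_{i+1}}(y) for all y in the support of f, then θ_{i+1} also maximizes Σ_y f(y) E_{q^s_{θ_i}(X|y)}[log q^s_θ(X,y)] over all θ with s_{θ_i}(y) ⊆ s_θ(y) for all y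 in the support of f. -/
open scoped BigOperators Classical

/-- N-best EM update validity: if `θn` maximizes the auxiliary function
`A(θ) = Σ_y f(y) E_{q^s_{θi}(X|y)}[log q_θ(X,y)]` over all `θ` and the sampled
supports do not shrink (`s_{θi}(y) ⊆ s_{θn}(y)` on the support of `f`), then
`θn` also maximizes the truncated auxiliary function
`B(θ) = Σ_y f(y) E_{q^s_{θi}(X|y)}[log q^s_θ(X,y)]` over all `θ` whose supports
include those of `θi` on the support of `f`. -/
theorem nbest_em_update_validity
    {X Y Θ : Type*} [Fintype X] [Fintype Y] [Nonempty X] [Nonempty Y]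
    (q : Θ → X → Y → ℝ) (s : Θ → Y → Finset X) (f : Y → ℝ)
    (hq1 : ∀ θ, ∑ x, ∑ y, q θ x y = 1) (hqpos : ∀ θ x y, 0 < q θ x y)
    (hs : ∀ θ y, (s θ y).Nonempty)
    (hf1 : ∑ y, f y = 1) (hfnn : ∀ y, 0 ≤ f y)
    (θi θn : Θ)
    (hincl : ∀ y, 0 < f y → s θi y ⊆ s θn y)
    (hmaxA : ∀ θ : Θ,
      (∑ y, f y * ∑ x ∈ s θi y,
          (q θi x y / ∑ x' ∈ s θi y, q θi x' y) * Real.log (q θ x y))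
        ≤ ∑ y, f y * ∑ x ∈ s θi y,
          (q θi x y / ∑ x' ∈ s θi y, q θi x' y) * Real.log (q θn x y)) :
    ∀ θ : Θ, (∀ y, 0 < f y → s θi y ⊆ s θ y) →
      (∑ y, f y * ∑ x ∈ s θi y,
          (q θi x y / ∑ x' ∈ s θi y, q θi x' y)
            * Real.log (if x ∈ s θ y then q θ x y else 0))
        ≤ ∑ y, f y * ∑ x ∈ s θi y,
          (q θi x y / ∑ x' ∈ s θi y, q θi x' y)
            * Real.log (if x ∈ s θn y then q θn x y else 0) := by
  intro θ hθ
  have key : ∀ θ' : Θ, (∀ y, 0 < f y → s θi y ⊆ s θ' y) →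
      (∑ y, f y * ∑ x ∈ s θi y,
          (q θi x y / ∑ x' ∈ s θi y, q θi x' y)
            * Real.log (if x ∈ s θ' y then q θ' x y else 0))
      = ∑ y, f y * ∑ x ∈ s θi y,
          (q θi x y / ∑ x' ∈ s θi y, q θi x' y) * Real.log (q θ' x y) := by
    intro θ' h
    refine Finset.sum_congr rfl fun y _ => ?_
    rcases eq_or_lt_of_le (hfnn y) with hy | hy
    · simp [← hy]
    · congr 1
      refine Finset.sum_congr rfl fun x hx => ?_
      rw [if_pos (h y hy hx)]
  rw [key θ hθ, key θn hincl]
  exact hmaxA θ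
end

section
/- If the hidden-event support does not shrink and the auxiliary function does not decrease, the N-best 'likelihood' is non-decreasing: under the hypotheses of the N-best EM proposition (strictly positive q_θ, s_{θ_i}(y) ⊆ s_{θ_{i+1}}(y) for all y in supp f, and θ_{i+1} maximizing the truncated auxiliary function), the truncated likelihood L^s(θ) = Σ_y f(y) log(Σ_{x∈s_θ(y)} q_θ(x,y)) satisfies L^s(θ_{i+1}) ≥ L^s(θ_i). -/
/-!
Fix `y` and write `w x = q_{θi}(x,y) / Σ_{x ∈ s_{θi}(y)} q_{θi}(x,y)` for the truncated posterior.
By Jensen's inequality for the concave logarithm,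
`Σ_x w x · log (q_{θn}(x,y) / q_{θi}(x,y)) ≤ log Σ_x w x · q_{θn}(x,y) / q_{θi}(x,y)`,
and the right-hand side is the log-ratio of the two truncated masses, with the `θn`-mass
taken over `s_{θi}(y)`; enlarging that set to `s_{θn}(y)` only increases it. Averaging over `f`,
the gain of the auxiliary function bounds the gain of the truncated likelihood from below.
-/

open Finset Real

section LogSum

variable {ι : Type*} {s t : Finset ι} {p r : ι → ℝ}

theorem sum_normalized_mul_log_sub_le_log_sum_sub_log_sum (hs : s.Nonempty)
    (hp : ∀ x ∈ s, 0 < p x) (hr : ∀ x ∈ s, 0 < r x) :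
    ∑ x ∈ s, p x / (∑ x' ∈ s, p x') * log (r x)
        - ∑ x ∈ s, p x / (∑ x' ∈ s, p x') * log (p x)
      ≤ log (∑ x ∈ s, r x) - log (∑ x ∈ s, p x) := by
  set P := ∑ x' ∈ s, p x'
  have hP : 0 < P := sum_pos hp hs
  have hjensen := strictConcaveOn_log_Ioi.concaveOn.le_map_sum (t := s) (w := fun x ↦ p x / P)
    (p := fun x ↦ r x / p x) (fun x hx ↦ (div_pos (hp x hx) hP).le)
    (by rw [← sum_div, div_self hP.ne']) (fun x hx ↦ div_pos (hr x hx) (hp x hx))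
  have hmean : ∑ x ∈ s, p x / P * (r x / p x) = (∑ x ∈ s, r x) / P := by
    rw [sum_div]
    refine sum_congr rfl fun x hx ↦ ?_
    field_simp [(hp x hx).ne']
  have hlog : ∑ x ∈ s, p x / P * log (r x / p x)
      = ∑ x ∈ s, p x / P * log (r x) - ∑ x ∈ s, p x / P * log (p x) := by
    rw [← sum_sub_distrib]
    refine sum_congr rfl fun x hx ↦ ?_
    rw [log_div (hr x hx).ne' (hp x hx).ne']
    ring
  simp only [smul_eq_mul] at hjensen
  rwa [← hlog, ← log_div (sum_pos hr hs).ne' hP.ne', ← hmean]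

theorem log_sum_add_normalized_log_gain_le (hst : s ⊆ t) (hs : s.Nonempty)
    (hp : ∀ x ∈ s, 0 < p x) (hr : ∀ x ∈ t, 0 < r x) :
    log (∑ x ∈ s, p x)
        + (∑ x ∈ s, p x / (∑ x' ∈ s, p x') * log (r x)
          - ∑ x ∈ s, p x / (∑ x' ∈ s, p x') * log (p x))
      ≤ log (∑ x ∈ t, r x) := by
  have hgain := sum_normalized_mul_log_sub_le_log_sum_sub_log_sum hs hp fun x hx ↦ hr x (hst hx)
  have hmono : log (∑ x ∈ s, r x) ≤ log (∑ x ∈ t, r x) :=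
    log_le_log (sum_pos (fun x hx ↦ hr x (hst hx)) hs)
      (sum_le_sum_of_subset_of_nonneg hst fun x hx _ ↦ (hr x hx).le)
  linarith

end LogSum

theorem sum_mul_le_sum_mul_of_pos_imp_le {Y : Type*} {u : Finset Y} {f a b : Y → ℝ}
    (hf : ∀ y ∈ u, 0 ≤ f y) (hab : ∀ y ∈ u, 0 < f y → a y ≤ b y) :
    ∑ y ∈ u, f y * a y ≤ ∑ y ∈ u, f y * b y := by
  refine sum_le_sum fun y hy ↦ ?_
  rcases (hf y hy).eq_or_lt with hfy | hfy
  · simp [← hfy]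
  · exact mul_le_mul_of_nonneg_left (hab y hy hfy) hfy.le

theorem nbest_likelihood_nondecreasing_general
    {X Y Θ : Type*} [Fintype X] [Fintype Y]
    (q : Θ → X → Y → ℝ) (s : Θ → Y → Finset X) (f : Y → ℝ)
    (hqpos : ∀ θ x y, 0 < q θ x y)
    (hs : ∀ θ y, (s θ y).Nonempty)
    (hfnn : ∀ y, 0 ≤ f y)
    (θi θn : Θ)
    (hincl : ∀ y, 0 < f y → s θi y ⊆ s θn y)
    (hA : (∑ y, f y * ∑ x ∈ s θi y,
            (q θi x y / ∑ x' ∈ s θi y, q θi x' y) * Real.log (q θi x y))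
        ≤ ∑ y, f y * ∑ x ∈ s θi y,
            (q θi x y / ∑ x' ∈ s θi y, q θi x' y) * Real.log (q θn x y)) :
    (∑ y, f y * Real.log (∑ x ∈ s θi y, q θi x y))
      ≤ ∑ y, f y * Real.log (∑ x ∈ s θn y, q θn x y) := by
  have hgain := sum_mul_le_sum_mul_of_pos_imp_le (u := univ) (fun y _ ↦ hfnn y)
    fun y _ hfy ↦ log_sum_add_normalized_log_gain_le (hincl y hfy) (hs θi y)
      (fun x _ ↦ hqpos θi x y) fun x _ ↦ hqpos θn x y
  simp only [mul_add, mul_sub, sum_add_distrib, sum_sub_distrib] at hgain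
  linarith

/-- Monotonicity of the N-best 'likelihood': under strictly positive models,
non-shrinking sampled supports (`s_{θi}(y) ⊆ s_{θn}(y)` on the support of `f`),
and a non-decreasing truncated auxiliary function
`A(θ) = Σ_y f(y) Σ_{x∈s_{θi}(y)} q^s_{θi}(x|y) log q_θ(x,y)`, the truncated
likelihood `L^s(θ) = Σ_y f(y) log(Σ_{x∈s_θ(y)} q_θ(x,y))` does not decrease. -/
theorem nbest_likelihood_nondecreasing
    {X Y Θ : Type*} [Fintype X] [Fintype Y] [Nonempty X] [Nonempty Y]
    (q : Θ → X → Y → ℝ) (s : Θ → Y → Finset X) (f : Y → ℝ)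
    (hq1 : ∀ θ, ∑ x, ∑ y, q θ x y = 1) (hqpos : ∀ θ x y, 0 < q θ x y)
    (hs : ∀ θ y, (s θ y).Nonempty)
    (hf1 : ∑ y, f y = 1) (hfnn : ∀ y, 0 ≤ f y)
    (θi θn : Θ)
    (hincl : ∀ y, 0 < f y → s θi y ⊆ s θn y)
    (hA : (∑ y, f y * ∑ x ∈ s θi y,
            (q θi x y / ∑ x' ∈ s θi y, q θi x' y) * Real.log (q θi x y))
        ≤ ∑ y, f y * ∑ x ∈ s θi y,
            (q θi x y / ∑ x' ∈ s θi y, q θi x' y) * Real.log (q θn x y)) :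
    (∑ y, f y * Real.log (∑ x ∈ s θi y, q θi x y))
      ≤ ∑ y, f y * Real.log (∑ x ∈ s θn y, q θn x y) :=
  nbest_likelihood_nondecreasing_general q s f hqpos hs hfnn θi θn hincl hA
end
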